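/- Let $\mathcal{F}$ be a sheaf of abelian groups on a fan $\Delta$ with its fan topology, determined by data $(F_\sigma, \varrho^\sigma_\tau)$. Then $\mathcal{F}$ is flabby (every restriction map $\mathcal{F}(\Delta') \to \mathcal{F}(\Lambda)$ for open $\Lambda \subseteq \Delta' \subseteq \Delta$ is surjective) if and only if for every cone $\sigma \in \Delta$ the restriction map $\mathcal{F}(\langle\sigma\rangle) \to \mathcal{F}(\partial\sigma)$ to the boundary fan $\partial\sigma = \langle\sigma\rangle \setminus \{\sigma\}$ is surjective. -/

import Mathlib

open scoped Classical

/-- The sections over a subset `Λ` of the fan `Δ` of the sheaf determined by the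
data `(F_σ, ρ^σ_τ)`: compatible families, extended by zero outside `Λ`. -/
def FanSections {Δ : Type*} [PartialOrder Δ] (F : Δ → Type*) [∀ σ, AddCommGroup (F σ)]
    (ρ : ∀ ⦃σ τ : Δ⦄, τ ≤ σ → (F σ →+ F τ)) (Λ : Set Δ) : Type _ :=
  {f : ∀ σ, F σ //
    (∀ σ, σ ∉ Λ → f σ = 0) ∧ ∀ ⦃σ τ : Δ⦄ (hle : τ ≤ σ), σ ∈ Λ → ρ hle (f σ) = f τ}

/-- Restriction of sections from a larger open (down-closed) set `Λ'` to a smaller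
one `Λ`. -/
noncomputable def FanSections.restrict {Δ : Type*} [PartialOrder Δ] (F : Δ → Type*)
    [∀ σ, AddCommGroup (F σ)] (ρ : ∀ ⦃σ τ : Δ⦄, τ ≤ σ → (F σ →+ F τ))
    {Λ Λ' : Set Δ} (hΛ : IsLowerSet Λ) (hsub : Λ ⊆ Λ') :
    FanSections F ρ Λ' → FanSections F ρ Λ := fun f =>
  ⟨fun σ => if σ ∈ Λ then f.1 σ else 0, by
    constructor
    · intro σ hσ; exact if_neg hσ
    · intro σ τ hle hσ
      simp only [if_pos hσ, if_pos (hΛ hle hσ)]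
      exact f.2.2 hle (hsub hσ)⟩

/-!
Flabbiness reduces to the boundary condition by filling in one cone at a time: if `Λ ⊆ Λ'`
are open and `σ` is a minimal cone of `Λ' \ Λ`, then `∂σ ⊆ Λ`, so a section over `Λ`
restricts to a section over `∂σ`, which extends over `⟨σ⟩`; gluing the two gives a section
over the open set `Λ ∪ {σ}`. Since `Δ` is finite, after finitely many steps we reach `Λ'`.
-/

open Function

theorem IsLowerSet.insert_of_Iio_subset {α : Type*} [PartialOrder α] {s : Set α} {a : α}
    (hs : IsLowerSet s) (ha : Set.Iio a ⊆ s) : IsLowerSet (insert a s) := by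
  rintro b c hcb (rfl | hb)
  · obtain rfl | hlt := hcb.eq_or_lt
    · exact Set.mem_insert _ _
    · exact Set.mem_insert_of_mem _ (ha hlt)
  · exact Set.mem_insert_of_mem _ (hs hcb hb)

namespace FanSections

variable {Δ : Type*} [PartialOrder Δ] (F : Δ → Type*) [∀ σ, AddCommGroup (F σ)]
  (ρ : ∀ ⦃σ τ : Δ⦄, τ ≤ σ → (F σ →+ F τ))

theorem restrict_apply_of_mem {Λ Λ' : Set Δ} (hΛ : IsLowerSet Λ) (hsub : Λ ⊆ Λ')
    (f : FanSections F ρ Λ') {σ : Δ} (hσ : σ ∈ Λ) : (restrict F ρ hΛ hsub f).1 σ = f.1 σ :=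
  if_pos hσ

theorem restrict_self {Λ : Set Δ} (hΛ : IsLowerSet Λ) (hsub : Λ ⊆ Λ)
    (f : FanSections F ρ Λ) : restrict F ρ hΛ hsub f = f := by
  refine Subtype.ext (funext fun σ => ?_)
  by_cases hσ : σ ∈ Λ
  · exact restrict_apply_of_mem F ρ hΛ hsub f hσ
  · exact (if_neg hσ).trans (f.2.1 σ hσ).symm

theorem restrict_restrict {Λ₁ Λ₂ Λ₃ : Set Δ} (hΛ₁ : IsLowerSet Λ₁) (hΛ₂ : IsLowerSet Λ₂)
    (h₁₂ : Λ₁ ⊆ Λ₂) (h₂₃ : Λ₂ ⊆ Λ₃) (f : FanSections F ρ Λ₃) :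
    restrict F ρ hΛ₁ h₁₂ (restrict F ρ hΛ₂ h₂₃ f) = restrict F ρ hΛ₁ (h₁₂.trans h₂₃) f := by
  refine Subtype.ext (funext fun σ => ?_)
  by_cases hσ : σ ∈ Λ₁
  · simp only [restrict_apply_of_mem F ρ _ _ _ hσ, restrict_apply_of_mem F ρ _ _ _ (h₁₂ hσ)]
  · exact (if_neg hσ).trans (if_neg hσ).symm

theorem restrict_surjective_trans {Λ₁ Λ₂ Λ₃ : Set Δ} (hΛ₁ : IsLowerSet Λ₁)
    (hΛ₂ : IsLowerSet Λ₂) (h₁₂ : Λ₁ ⊆ Λ₂) (h₂₃ : Λ₂ ⊆ Λ₃)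
    (h₁ : Surjective (restrict F ρ hΛ₁ h₁₂)) (h₂ : Surjective (restrict F ρ hΛ₂ h₂₃)) :
    Surjective (restrict F ρ hΛ₁ (h₁₂.trans h₂₃)) := by
  simpa only [comp_def, restrict_restrict] using h₁.comp h₂

theorem restrict_insert_surjective {Λ : Set Δ} (hΛ : IsLowerSet Λ) {σ : Δ} (hσ : Set.Iio σ ⊆ Λ)
    (hb : Surjective (restrict F ρ (isLowerSet_Iio σ) Set.Iio_subset_Iic_self)) :
    Surjective (restrict F ρ hΛ (Set.subset_insert σ Λ)) := by
  intro f
  obtain ⟨g, hg⟩ := hb (restrict F ρ (isLowerSet_Iio σ) hσ f)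
  have hgf : ∀ τ < σ, g.1 τ = f.1 τ := fun τ hτ => by
    simpa only [restrict_apply_of_mem F ρ _ _ _ (show τ ∈ Set.Iio σ from hτ)] using
      congrArg (fun s => s.1 τ) hg
  let glued : FanSections F ρ (insert σ Λ) :=
    ⟨fun τ => if τ ∈ Λ then f.1 τ else g.1 τ, fun τ hτ => by
      dsimp only
      rw [if_neg fun h => hτ (Set.mem_insert_of_mem _ h)]
      refine g.2.1 τ fun hτσ => hτ ?_
      obtain rfl | hlt := (Set.mem_Iic.mp hτσ).eq_or_lt
      · exact Set.mem_insert _ _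
      · exact Set.mem_insert_of_mem _ (hσ hlt), fun τ γ hγτ hτ => by
      dsimp only
      by_cases hτΛ : τ ∈ Λ
      · simp only [if_pos hτΛ, if_pos (hΛ hγτ hτΛ)]
        exact f.2.2 hγτ hτΛ
      obtain rfl : τ = σ := (Set.mem_insert_iff.mp hτ).resolve_right hτΛ
      simp only [if_neg hτΛ, g.2.2 hγτ le_rfl]
      split_ifs with hγΛ
      · exact hgf γ (hγτ.lt_of_ne fun h => hτΛ (h ▸ hγΛ))
      · rfl⟩
  refine ⟨glued, Subtype.ext (funext fun τ => ?_)⟩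
  by_cases hτ : τ ∈ Λ
  · exact (restrict_apply_of_mem F ρ _ _ _ hτ).trans (if_pos hτ)
  · exact (if_neg hτ).trans (f.2.1 τ hτ).symm

theorem restrict_surjective_of_boundary [Finite Δ]
    (hb : ∀ σ : Δ, Surjective (restrict F ρ (isLowerSet_Iio σ) Set.Iio_subset_Iic_self))
    {Λ Λ' : Set Δ} (hΛ : IsLowerSet Λ) (hΛ' : IsLowerSet Λ') (hsub : Λ ⊆ Λ') :
    Surjective (restrict F ρ hΛ hsub) := by
  obtain hempty | hne := (Λ' \ Λ).eq_empty_or_nonempty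
  · obtain rfl : Λ = Λ' := hsub.antisymm (Set.sdiff_eq_empty.mp hempty)
    exact fun f => ⟨f, restrict_self F ρ hΛ hsub f⟩
  obtain ⟨σ, ⟨hσΛ', hσΛ⟩, hmin⟩ := exists_minimal_of_wellFoundedLT (· ∈ Λ' \ Λ) hne
  have hIio : Set.Iio σ ⊆ Λ := fun τ hτ => by_contra fun hτΛ =>
    hτ.not_ge (hmin ⟨hΛ' hτ.le hσΛ', hτΛ⟩ hτ.le)
  have hdecr : (Λ' \ insert σ Λ).ncard < (Λ' \ Λ).ncard :=
    Set.ncard_lt_ncard <|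
      (Set.sdiff_subset_sdiff_right (Set.subset_insert σ Λ)).ssubset_of_mem_notMem
        ⟨hσΛ', hσΛ⟩ fun h => h.2 (Set.mem_insert σ Λ)
  exact restrict_surjective_trans F ρ hΛ (hΛ.insert_of_Iio_subset hIio) _
    (Set.insert_subset hσΛ' hsub) (restrict_insert_surjective F ρ hΛ hIio (hb σ))
    (restrict_surjective_of_boundary hb (hΛ.insert_of_Iio_subset hIio) hΛ' _)
termination_by (Λ' \ Λ).ncard

end FanSections

theorem flabby_iff_boundary_restrictions_surjective_general
    {Δ : Type*} [PartialOrder Δ] [Fintype Δ] (F : Δ → Type*) [∀ σ, AddCommGroup (F σ)]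
    (ρ : ∀ ⦃σ τ : Δ⦄, τ ≤ σ → (F σ →+ F τ)) :
    (∀ (Λ Λ' : Set Δ) (hΛ : IsLowerSet Λ) (_hΛ' : IsLowerSet Λ') (hsub : Λ ⊆ Λ'),
        Function.Surjective (FanSections.restrict F ρ hΛ hsub)) ↔
    (∀ σ : Δ, Function.Surjective
        (FanSections.restrict F ρ (isLowerSet_Iio σ) (Set.Iio_subset_Iic_self))) :=
  ⟨fun h σ => h _ _ (isLowerSet_Iio σ) (isLowerSet_Iic σ) _,
    fun hb _ _ hΛ hΛ' hsub => FanSections.restrict_surjective_of_boundary F ρ hb hΛ hΛ' hsub⟩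

/-- A sheaf on a fan `Δ` (a finite poset with the fan topology,
open = down-closed) determined by data `(F_σ, ρ^σ_τ)` is flabby — every
restriction map between open sets is surjective — if and only if for every cone
`σ` the restriction map `F(⟨σ⟩) → F(∂σ)` is surjective, where
`⟨σ⟩ = Set.Iic σ` and `∂σ = Set.Iio σ`. -/
theorem flabby_iff_boundary_restrictions_surjective
    {Δ : Type*} [PartialOrder Δ] [Fintype Δ] (F : Δ → Type*) [∀ σ, AddCommGroup (F σ)]
    (ρ : ∀ ⦃σ τ : Δ⦄, τ ≤ σ → (F σ →+ F τ))
    (hid : ∀ σ : Δ, ρ (le_refl σ) = AddMonoidHom.id (F σ))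
    (hcomp : ∀ ⦃σ τ γ : Δ⦄ (h1 : γ ≤ τ) (h2 : τ ≤ σ),
      (ρ h1).comp (ρ h2) = ρ (h1.trans h2)) :
    (∀ (Λ Λ' : Set Δ) (hΛ : IsLowerSet Λ) (_hΛ' : IsLowerSet Λ') (hsub : Λ ⊆ Λ'),
        Function.Surjective (FanSections.restrict F ρ hΛ hsub)) ↔
    (∀ σ : Δ, Function.Surjective
        (FanSections.restrict F ρ (isLowerSet_Iio σ) (Set.Iio_subset_Iic_self))) :=
  flabby_iff_boundary_restrictions_surjective_general F ρ
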